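/- Let U, H be real Hilbert spaces, let S, S_σ : U → H be bounded linear operators, y_d ∈ H, α_l > 0. Let l̄ minimize j(l) = ½‖S l − y_d‖² + (α_l/2)‖l‖² over U and let l̄_σ minimize j_σ(l) = ½‖S_σ l − y_d‖² + (α_l/2)‖l‖² over U. Denote z̄ = S*(S l̄ − y_d) and z̄_{τh}(l̄) = S_σ*(S_σ l̄ − y_d). Then α_l ‖l̄ − l̄_σ‖² ≤ (z̄ − z̄_{τh}(l̄), l̄_σ − l̄), and consequently ‖l̄ − l̄_σ‖ ≤ (1/α_l)‖z̄ − z̄_{τh}(l̄)‖. -/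

import Mathlib

/-!
Both minimizers satisfy the first-order condition `S*(S l - y_d) + α_l l = 0` of their functional.
Subtracting the two conditions and inserting `z̄_{τh}(l̄)` gives
`(z̄ - z̄_{τh}(l̄), l̄_σ - l̄) = α_l ‖l̄ - l̄_σ‖² + ‖S_σ (l̄ - l̄_σ)‖²`,
and the error estimate follows by dropping the last square and applying Cauchy–Schwarz.
-/

section

open ContinuousLinearMap

variable {U H : Type _}
    [NormedAddCommGroup U] [InnerProductSpace ℝ U] [CompleteSpace U]
    [NormedAddCommGroup H] [InnerProductSpace ℝ H] [CompleteSpace H]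

noncomputable def tikhonov (S : U →L[ℝ] H) (y : H) (α : ℝ) (l : U) : ℝ :=
  1 / 2 * ‖S l - y‖ ^ 2 + α / 2 * ‖l‖ ^ 2

theorem hasFDerivAt_tikhonov (S : U →L[ℝ] H) (y : H) (α : ℝ) (l : U) :
    HasFDerivAt (tikhonov S y α) (innerSL ℝ (adjoint S (S l - y) + α • l)) l := by
  have hS : HasFDerivAt (fun l => S l - y) S l := S.hasFDerivAt.sub_const y
  refine ((hS.norm_sq.const_mul (1 / 2)).add
    ((hasFDerivAt_id l).norm_sq.const_mul (α / 2))).congr_fderiv ?_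
  ext v
  simp [adjoint_inner_left]
  ring

theorem adjoint_apply_sub_add_smul_eq_zero_of_forall_tikhonov_le {S : U →L[ℝ] H} {y : H}
    {α : ℝ} {l₀ : U} (h : ∀ l, tikhonov S y α l₀ ≤ tikhonov S y α l) :
    adjoint S (S l₀ - y) + α • l₀ = 0 := by
  have hmin : IsLocalMin (tikhonov S y α) l₀ := Filter.Eventually.of_forall h
  have hzero := hmin.hasFDerivAt_eq_zero (hasFDerivAt_tikhonov S y α l₀)
  set g := adjoint S (S l₀ - y) + α • l₀
  exact inner_self_eq_zero.mp <| by
    simpa only [innerSL_apply_apply, zero_apply] using DFunLike.congr_fun hzero g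

theorem inner_sub_adjoint_eq_of_optimality {T : U →L[ℝ] H} {y : H} {α : ℝ} {l m z : U}
    (hz : z + α • l = 0) (hm : adjoint T (T m - y) + α • m = 0) :
    inner ℝ (z - adjoint T (T l - y)) (m - l) = α * ‖l - m‖ ^ 2 + ‖T (l - m)‖ ^ 2 := by
  have hdiff : z - adjoint T (T l - y) = α • (m - l) - adjoint T (T (l - m)) := by
    have hsplit : adjoint T (T l - y) = adjoint T (T m - y) + adjoint T (T (l - m)) := by
      rw [← map_add, map_sub T l m]
      congr 1
      abel
    rw [hsplit, eq_neg_of_add_eq_zero_left hz, eq_neg_of_add_eq_zero_left hm, smul_sub]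
    abel
  rw [hdiff, inner_sub_left, real_inner_smul_left, real_inner_self_eq_norm_sq, adjoint_inner_left,
    ← neg_sub l m, map_neg, inner_neg_right, real_inner_self_eq_norm_sq, norm_neg]
  ring

end

theorem mul_le_of_mul_sq_le_mul {α x c : ℝ} (hx : 0 ≤ x) (hc : 0 ≤ c) (h : α * x ^ 2 ≤ c * x) :
    α * x ≤ c := by
  rcases hx.eq_or_lt with rfl | hx
  · simpa using hc
  · nlinarith

theorem stmt_7 {U H : Type*}
    [NormedAddCommGroup U] [InnerProductSpace ℝ U] [CompleteSpace U]
    [NormedAddCommGroup H] [InnerProductSpace ℝ H] [CompleteSpace H]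
    (S Sσ : U →L[ℝ] H) (y_d : H) (αl : ℝ) (hαl : 0 < αl)
    (j jσ : U → ℝ)
    (hj : ∀ l, j l = (1 / 2) * ‖S l - y_d‖ ^ 2 + (αl / 2) * ‖l‖ ^ 2)
    (hjσ : ∀ l, jσ l = (1 / 2) * ‖Sσ l - y_d‖ ^ 2 + (αl / 2) * ‖l‖ ^ 2)
    (lbar lσ : U)
    (hmin : ∀ l : U, j lbar ≤ j l)
    (hminσ : ∀ l : U, jσ lσ ≤ jσ l)
    (zbar zτh : U)
    (hzbar : zbar = (ContinuousLinearMap.adjoint S) (S lbar - y_d))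
    (hzτh : zτh = (ContinuousLinearMap.adjoint Sσ) (Sσ lbar - y_d)) :
    αl * ‖lbar - lσ‖ ^ 2 ≤ (inner ℝ (zbar - zτh) (lσ - lbar) : ℝ) ∧
      ‖lbar - lσ‖ ≤ (1 / αl) * ‖zbar - zτh‖ := by
  obtain rfl : j = tikhonov S y_d αl := funext hj
  obtain rfl : jσ = tikhonov Sσ y_d αl := funext hjσ
  have hopt : zbar + αl • lbar = 0 :=
    hzbar ▸ adjoint_apply_sub_add_smul_eq_zero_of_forall_tikhonov_le hmin
  have hoptσ := adjoint_apply_sub_add_smul_eq_zero_of_forall_tikhonov_le hminσ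
  have hinner := hzτh ▸ inner_sub_adjoint_eq_of_optimality hopt hoptσ
  have hcoercive : αl * ‖lbar - lσ‖ ^ 2 ≤ inner ℝ (zbar - zτh) (lσ - lbar) := by
    rw [hinner]
    exact le_add_of_nonneg_right (sq_nonneg _)
  refine ⟨hcoercive, ?_⟩
  have hcs : inner ℝ (zbar - zτh) (lσ - lbar) ≤ ‖zbar - zτh‖ * ‖lbar - lσ‖ :=
    norm_sub_rev lσ lbar ▸ real_inner_le_norm _ _
  rw [one_div_mul_eq_div, le_div_iff₀' hαl]
  exact mul_le_of_mul_sq_le_mul (norm_nonneg _) (norm_nonneg _) (hcoercive.trans hcs)
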